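/- Slice Relation: Let A be a sequence of distinct reals with EST points t_i = (a_i^+, a_i^-). Suppose i < j and there exists a natural number y with a_i^- ≤ y ≤ a_j^- such that no index k ≤ j satisfies a_k^- = y and a_k^+ > a_i^+. Then a_i > a_j. -/

import Mathlib

/-- Length of the longest strictly increasing subsequence of `a` ending at index `i`. -/
noncomputable def incLen {n : ℕ} (a : Fin n → ℝ) (i : Fin n) : ℕ :=
  sSup {m | ∃ σ : Fin (m + 1) → Fin n,
    StrictMono σ ∧ StrictMono (a ∘ σ) ∧ σ (Fin.last m) = i} + 1

/-- Length of the longest strictly decreasing subsequence of `a` ending at index `i`. -/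
noncomputable def decLen {n : ℕ} (a : Fin n → ℝ) (i : Fin n) : ℕ :=
  sSup {m | ∃ σ : Fin (m + 1) → Fin n,
    StrictMono σ ∧ StrictAnti (a ∘ σ) ∧ σ (Fin.last m) = i} + 1

/-!
Suppose `a i < a j`. Walking backwards from `j` along a longest decreasing subsequence lowers
`decLen` one step at a time while keeping the values `≥ a j`, so some `k ≤ j` has `decLen a k = y`
and `a i < a k`. Then `k ≤ i` is impossible (it would force `decLen a k < decLen a i ≤ y`), and
`i < k` means `k` extends every increasing subsequence ending at `i`, so `incLen a k > incLen a i`,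
contradicting the hypothesis on the row `y`.
-/

lemma Fin.strictMono_snoc {α : Type*} [Preorder α] {m : ℕ} {f : Fin (m + 1) → α} {x : α}
    (hf : StrictMono f) (hx : f (Fin.last m) < x) : StrictMono (Fin.snoc f x : Fin (m + 2) → α) := by
  rw [Fin.strictMono_iff_lt_succ]
  intro p
  rcases Fin.eq_castSucc_or_eq_last p with ⟨p, rfl⟩ | rfl
  · rw [Fin.succ_castSucc, Fin.snoc_castSucc, Fin.snoc_castSucc]
    exact hf Fin.castSucc_lt_succ
  · rwa [Fin.succ_last, Fin.snoc_last, Fin.snoc_castSucc]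

lemma Fin.strictAnti_snoc {α : Type*} [Preorder α] {m : ℕ} {f : Fin (m + 1) → α} {x : α}
    (hf : StrictAnti f) (hx : x < f (Fin.last m)) : StrictAnti (Fin.snoc f x : Fin (m + 2) → α) :=
  Fin.strictMono_snoc (α := αᵒᵈ) hf hx

section DecLen

variable {n : ℕ} (a : Fin n → ℝ)

def decChainLengths (k : Fin n) : Set ℕ :=
  {m | ∃ σ : Fin (m + 1) → Fin n, StrictMono σ ∧ StrictAnti (a ∘ σ) ∧ σ (Fin.last m) = k}

lemma decLen_eq_sSup_add_one (k : Fin n) : decLen a k = sSup (decChainLengths a k) + 1 := rfl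

lemma zero_mem_decChainLengths (k : Fin n) : 0 ∈ decChainLengths a k :=
  ⟨fun _ => k, Subsingleton.strictMono (α := Fin 1) _, Subsingleton.strictAnti (α := Fin 1) _, rfl⟩

lemma bddAbove_decChainLengths (k : Fin n) : BddAbove (decChainLengths a k) := by
  refine ⟨n, fun m ⟨σ, hσ, _⟩ => ?_⟩
  exact Nat.le_of_succ_le (by simpa using Fintype.card_le_of_injective σ hσ.injective)

lemma sSup_mem_decChainLengths (k : Fin n) : sSup (decChainLengths a k) ∈ decChainLengths a k :=
  Nat.sSup_mem ⟨0, zero_mem_decChainLengths a k⟩ (bddAbove_decChainLengths a k)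

lemma le_sSup_decChainLengths {k : Fin n} {m : ℕ} (hm : m ∈ decChainLengths a k) :
    m ≤ sSup (decChainLengths a k) :=
  le_csSup (bddAbove_decChainLengths a k) hm

lemma one_le_decLen (k : Fin n) : 1 ≤ decLen a k := Nat.le_add_left 1 _

variable {a}

lemma decLen_lt_decLen {k k' : Fin n} (hk : k < k') (ha : a k' < a k) :
    decLen a k < decLen a k' := by
  obtain ⟨σ, hσ, haσ, hσk⟩ := sSup_mem_decChainLengths a k
  have hext : sSup (decChainLengths a k) + 1 ∈ decChainLengths a k' := by
    refine ⟨Fin.snoc σ k', Fin.strictMono_snoc hσ (by rwa [hσk]), ?_, Fin.snoc_last _ _⟩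
    rw [Fin.comp_snoc]
    exact Fin.strictAnti_snoc haσ (by simpa [hσk] using ha)
  have := le_sSup_decChainLengths a hext
  rw [decLen_eq_sSup_add_one, decLen_eq_sSup_add_one]
  omega

/-- The penultimate entry of a longest decreasing subsequence ending at `k`. -/
lemma exists_lt_decLen_add_one_eq {k : Fin n} (hk : 2 ≤ decLen a k) :
    ∃ k' < k, a k < a k' ∧ decLen a k' + 1 = decLen a k := by
  obtain ⟨m, hm⟩ : ∃ m, sSup (decChainLengths a k) = m + 1 :=
    Nat.exists_eq_add_one.mpr (by rw [decLen_eq_sSup_add_one] at hk; omega)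
  obtain ⟨σ, hσ, haσ, hσk⟩ := hm ▸ sSup_mem_decChainLengths a k
  have hlt : (Fin.last m).castSucc < Fin.last (m + 1) := Fin.castSucc_lt_last _
  have hk' : σ (Fin.last m).castSucc < k := hσk ▸ hσ hlt
  have ha' : a k < a (σ (Fin.last m).castSucc) := hσk ▸ haσ hlt
  refine ⟨_, hk', ha', le_antisymm (decLen_lt_decLen hk' ha') ?_⟩
  have hprefix : m ∈ decChainLengths a (σ (Fin.last m).castSucc) :=
    ⟨σ ∘ Fin.castSucc, hσ.comp Fin.strictMono_castSucc,
      haσ.comp_strictMono Fin.strictMono_castSucc, rfl⟩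
  have := le_sSup_decChainLengths a hprefix
  rw [decLen_eq_sSup_add_one, decLen_eq_sSup_add_one, hm]
  omega

lemma exists_le_decLen_eq {y : ℕ} (hy : 1 ≤ y) {k : Fin n} (hyk : y ≤ decLen a k) :
    ∃ k' ≤ k, a k ≤ a k' ∧ decLen a k' = y := by
  induction k using WellFoundedLT.induction with
  | ind k ih =>
    rcases hyk.eq_or_lt with hyk | hyk
    · exact ⟨k, le_rfl, le_rfl, hyk.symm⟩
    obtain ⟨k', hk', ha', hlen⟩ := exists_lt_decLen_add_one_eq (a := a) (k := k) (by omega)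
    obtain ⟨k'', hk'', ha'', hy⟩ := ih k' hk' (by omega)
    exact ⟨k'', hk''.trans hk'.le, ha'.le.trans ha'', hy⟩

end DecLen

lemma incLen_eq_decLen_neg {n : ℕ} (a : Fin n → ℝ) (k : Fin n) :
    incLen a k = decLen (-a) k := by
  have hcomp {m : ℕ} (σ : Fin (m + 1) → Fin n) : StrictMono (a ∘ σ) ↔ StrictAnti ((-a) ∘ σ) :=
    ⟨fun h _ _ hpq => neg_lt_neg (h hpq), fun h _ _ hpq => neg_lt_neg_iff.mp (h hpq)⟩
  simp only [incLen, decLen, hcomp]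

lemma incLen_lt_incLen {n : ℕ} {a : Fin n → ℝ} {k k' : Fin n} (hk : k < k') (ha : a k < a k') :
    incLen a k < incLen a k' := by
  rw [incLen_eq_decLen_neg, incLen_eq_decLen_neg]
  exact decLen_lt_decLen hk (neg_lt_neg ha)

theorem slice_relation {n : ℕ} (a : Fin n → ℝ) (ha : Function.Injective a)
    (i j : Fin n) (hij : i < j) (y : ℕ)
    (hy1 : decLen a i ≤ y) (hy2 : y ≤ decLen a j)
    (hempty : ∀ k : Fin n, k ≤ j → ¬(decLen a k = y ∧ incLen a k > incLen a i)) :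
    a i > a j := by
  by_contra! hle
  have hij' : a i < a j := hle.lt_of_ne (ha.ne hij.ne)
  obtain ⟨k, hkj, hjk, rfl⟩ := exists_le_decLen_eq ((one_le_decLen a i).trans hy1) hy2
  have hik' : a i < a k := hij'.trans_le hjk
  have hik : i < k := by
    refine lt_of_not_ge fun hki => ?_
    rcases hki.lt_or_eq with hki | rfl
    · exact (decLen_lt_decLen hki hik').not_ge hy1
    · exact hik'.false
  exact hempty k hkj ⟨rfl, incLen_lt_incLen hik hik'⟩
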